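/- Let a1, a2 > 0, b > −1, 0 < z < 1, and let L be the generalized-Hahn moment functional L[f] = Σ_{x=0}^{∞} f(x)·(a1)_x (a2)_x z^x / ((b+1)_x x!). Let (P_n)_{n≥0} be a monic orthogonal polynomial sequence for L with recurrence coefficients β_n, γ_n, and set u_n = β_n + β_{n−1} − n + b + 1 and v_n = β_n + β_{n−1} + n − 1 + a1 + a2. Then for all n ≥ 1 the first Laguerre–Freud equation holds: (1−z)·[(γ_{n+1}+γ_n) − (γ_n+γ_{n−1})] = z v_n·[(β_n+n) − (β_{n−1}+n−1)] − u_n·[(β_n−n) − (β_{n−1}−(n−1))]. -/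

import Mathlib

/-!
The weight satisfies the discrete Pearson equation
`w(x+1) (x+1)(x+1+b) = z (x+a₁)(x+a₂) w(x)`, so `L[σ q] = z L[ρ q(x+1)]` for every polynomial `q`,
with `σ = x(x+b)` and `ρ = (x+a₁)(x+a₂)`. Take `q = P_n(x-1) P_n(x)`. Expanding
`P_n(x+r) = P_n + n r P_{n-1} + c P_{n-2} + (lower degree)` and using the three-term recurrence,
both sides become explicit multiples of `h_n` in terms of `β`, `γ` and the subleading coefficient
`p_n` of `P_n`. Since `p_{n+1} = p_n - β_n`, subtracting the identities for `n` and `n - 1`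
eliminates `p_n` and leaves the Laguerre–Freud equation.
-/

open Polynomial Filter Topology

theorem Polynomial.coeff_comp_X_add_C_of_natDegree_le {R : Type*} [CommRing R] {f : R[X]} {k : ℕ}
    (hf : f.natDegree ≤ k + 2) (r : R) :
    (f.comp (X + C r)).coeff k =
      f.coeff k + (k + 1) * f.coeff (k + 1) * r + (k + 2).choose 2 * f.coeff (k + 2) * r ^ 2 := by
  rw [← taylor_apply, taylor_coeff, eval_eq_sum_range' (n := 3)]
  · simp only [Finset.sum_range_succ, Finset.sum_range_zero, hasseDeriv_coeff]
    rw [zero_add, zero_add, add_comm 1 k, add_comm 2 k, Nat.choose_self,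
      Nat.choose_succ_self_right, Nat.choose_symm_add]
    push_cast
    ring
  · have := natDegree_hasseDeriv_le f k
    omega

theorem Polynomial.degree_quadratic_mul_lt {R : Type*} [CommRing R] [IsDomain R] (c₁ c₀ : R)
    {f : R[X]} {k : ℕ} (hf : f.degree < k) :
    ((X ^ 2 + C c₁ * X + C c₀) * f).degree < ↑(k + 2) := by
  have h2 : (X ^ 2 + C c₁ * X + C c₀ : R[X]).degree = 2 := by compute_degree!
  rw [degree_mul, h2, Nat.cast_add, add_comm]
  exact WithBot.add_lt_add_right (by simp) hf

theorem LinearMap.map_C_mul {R : Type*} [CommRing R] (L : R[X] →ₗ[R] R) (a : R) (p : R[X]) :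
    L (C a * p) = a * L p := by
  rw [C_mul', map_smul, smul_eq_mul]

theorem LinearMap.map_quadratic_mul {R : Type*} [CommRing R] (L : R[X] →ₗ[R] R) (c₁ c₀ : R)
    (p q : R[X]) :
    L ((X ^ 2 + C c₁ * X + C c₀) * (p * q)) =
      L (X * p * (X * q)) + c₁ * L (X * p * q) + c₀ * L (p * q) := by
  rw [show (X ^ 2 + C c₁ * X + C c₀) * (p * q) =
      X * p * (X * q) + C c₁ * (X * p * q) + C c₀ * (p * q) by ring,
    map_add, map_add, L.map_C_mul, L.map_C_mul]

section OrthogonalPolynomials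

variable {K : Type*} [Field K]

/-- Since `P (0 - 1) = P 0`, it is `γ_zero` that makes the recurrence at `n = 0` read
`X * P 0 = P 1 + β 0 * P 0`. -/
structure IsMonicOrthogonalSeq (L : K[X] →ₗ[K] K) (P : ℕ → K[X]) (h β γ : ℕ → K) : Prop where
  monic : ∀ n, (P n).Monic
  natDegree_eq : ∀ n, (P n).natDegree = n
  orthogonal : ∀ n m, L (P n * P m) = if n = m then h n else 0
  recurrence : ∀ n, X * P n = P (n + 1) + C (β n) * P n + C (γ n) * P (n - 1)
  γ_zero : γ 0 = 0

namespace IsMonicOrthogonalSeq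

variable {L : K[X] →ₗ[K] K} {P : ℕ → K[X]} {h β γ : ℕ → K}
  (hP : IsMonicOrthogonalSeq L P h β γ)
include hP

theorem coeff_self (n : ℕ) : (P n).coeff n = 1 := by
  simpa [hP.natDegree_eq n] using (hP.monic n).coeff_natDegree

theorem coeff_eq_zero_of_lt {n j : ℕ} (hlt : n < j) : (P n).coeff j = 0 :=
  coeff_eq_zero_of_natDegree_lt (by rwa [hP.natDegree_eq])

theorem apply_zero : P 0 = 1 :=
  eq_one_of_monic_natDegree_zero (hP.monic 0) (hP.natDegree_eq 0)

theorem apply_one : P 1 = X - C (β 0) := by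
  have hrec := hP.recurrence 0
  rw [hP.apply_zero, hP.γ_zero] at hrec
  simp only [mul_one, map_zero, add_zero] at hrec
  rw [hrec]
  ring

theorem nextCoeff_zero : (P 0).nextCoeff = 0 := by
  rw [nextCoeff, hP.natDegree_eq, if_pos rfl]

theorem nextCoeff_succ_eq_coeff (n : ℕ) : (P (n + 1)).nextCoeff = (P (n + 1)).coeff n := by
  rw [nextCoeff_of_natDegree_pos (by rw [hP.natDegree_eq]; omega), hP.natDegree_eq,
    Nat.add_sub_cancel]

theorem nextCoeff_succ (n : ℕ) : (P (n + 1)).nextCoeff = (P n).nextCoeff - β n := by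
  cases n with
  | zero => rw [hP.apply_one, nextCoeff_X_sub_C, hP.nextCoeff_zero, zero_sub]
  | succ k =>
    have hrec := congrArg (coeff · (k + 1)) (hP.recurrence (k + 1))
    simp only [coeff_X_mul, coeff_add, coeff_C_mul, hP.coeff_self,
      hP.coeff_eq_zero_of_lt (show k + 1 - 1 < k + 1 by omega)] at hrec
    rw [hP.nextCoeff_succ_eq_coeff, hP.nextCoeff_succ_eq_coeff]
    linear_combination -hrec

theorem degree_comp_X_add_C_sub_lt (k : ℕ) (r : K) :
    ((P (k + 2)).comp (X + C r) - (P (k + 2) + C ((k + 2 : ℕ) * r) * P (k + 1) +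
      C ((k + 2).choose 2 * r ^ 2 - r * ((P (k + 2)).nextCoeff + (k + 2 : ℕ) * β (k + 1))) *
        P k)).degree < k := by
  have hnext : (P (k + 2)).coeff (k + 1) = (P (k + 1)).coeff k - β (k + 1) := by
    rw [← hP.nextCoeff_succ_eq_coeff, ← hP.nextCoeff_succ_eq_coeff, hP.nextCoeff_succ]
  rw [hP.nextCoeff_succ_eq_coeff, degree_lt_iff_coeff_zero]
  intro j hj
  rw [coeff_sub, coeff_add, coeff_add, coeff_C_mul, coeff_C_mul,
    coeff_comp_X_add_C_of_natDegree_le (by rw [hP.natDegree_eq]; omega)]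
  rcases (show k = j ∨ j = k + 1 ∨ j = k + 2 ∨ k + 2 < j by omega) with rfl | rfl | rfl | hj
  · simp only [hP.coeff_self]
    push_cast
    linear_combination ((k + 2 : K) * r) * hnext
  · simp (disch := omega) only [hP.coeff_self, hP.coeff_eq_zero_of_lt]
    push_cast
    ring
  · simp (disch := omega) only [hP.coeff_self, hP.coeff_eq_zero_of_lt]
    ring
  · simp (disch := omega) only [hP.coeff_eq_zero_of_lt]
    ring

theorem map_mul_self (n : ℕ) : L (P n * P n) = h n := by
  simp [hP.orthogonal]

theorem map_mul_of_ne {n m : ℕ} (hnm : n ≠ m) : L (P n * P m) = 0 := by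
  simp [hP.orthogonal, hnm]

theorem map_mul_eq_zero_of_degree_lt {f : K[X]} {n : ℕ} (hf : f.degree < n) :
    L (f * P n) = 0 := by
  suffices ∀ k ≤ n, ∀ f : K[X], f.degree < k → L (f * P n) = 0 from this n le_rfl f hf
  intro k
  induction k with
  | zero =>
    intro _ f hf
    rw [degree_lt_iff_coeff_zero] at hf
    rw [show f = 0 from ext fun m => hf m m.zero_le, zero_mul, map_zero]
  | succ k ih =>
    intro hk f hf
    rw [degree_lt_iff_coeff_zero] at hf
    have hlow : (f - C (f.coeff k) * P k).degree < k := by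
      rw [degree_lt_iff_coeff_zero]
      intro m hm
      rcases hm.eq_or_lt with rfl | hm
      · simp [hP.coeff_self]
      · simp [hf m hm, hP.coeff_eq_zero_of_lt hm]
    rw [show f * P n = (f - C (f.coeff k) * P k) * P n + C (f.coeff k) * (P k * P n) by ring,
      map_add, L.map_C_mul, ih (by omega) _ hlow, hP.map_mul_of_ne (by omega), mul_zero, add_zero]

theorem map_X_mul_mul_of_lt {n m : ℕ} (hmn : m + 1 < n) : L (X * P n * P m) = 0 := by
  rw [mul_right_comm, mul_comm X]
  refine hP.map_mul_eq_zero_of_degree_lt ?_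
  rw [degree_mul_X, degree_eq_natDegree (hP.monic m).ne_zero, hP.natDegree_eq]
  exact_mod_cast hmn

theorem map_X_mul_mul (n m : ℕ) : L (X * P n * P m) =
    L (P (n + 1) * P m) + β n * L (P n * P m) + γ n * L (P (n - 1) * P m) := by
  rw [hP.recurrence, add_mul, add_mul, map_add, map_add, mul_assoc, mul_assoc, L.map_C_mul,
    L.map_C_mul]

theorem map_X_mul_X_mul (n m : ℕ) : L (X * P n * (X * P m)) =
    L (X * P n * P (m + 1)) + β m * L (X * P n * P m) + γ m * L (X * P n * P (m - 1)) := by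
  rw [hP.recurrence m, mul_add, mul_add, map_add, map_add, mul_left_comm _ (C _),
    mul_left_comm _ (C _), L.map_C_mul, L.map_C_mul]

theorem map_X_mul_self (n : ℕ) : L (X * P n * P n) = β n * h n := by
  rw [hP.map_X_mul_mul, hP.map_mul_of_ne (by omega), hP.map_mul_self]
  cases n with
  | zero => simp [hP.γ_zero]
  | succ k => simp [hP.map_mul_of_ne (show k ≠ k + 1 by omega)]

theorem map_X_mul_succ (n : ℕ) : L (X * P (n + 1) * P n) = h (n + 1) := by
  rw [mul_right_comm, hP.map_X_mul_mul, hP.map_mul_self, hP.map_mul_of_ne (by omega),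
    hP.map_mul_of_ne (by omega)]
  ring

theorem h_succ (n : ℕ) : h (n + 1) = γ (n + 1) * h n := by
  rw [← hP.map_X_mul_succ, hP.map_X_mul_mul, hP.map_mul_of_ne (by omega),
    hP.map_mul_of_ne (by omega), Nat.add_sub_cancel, hP.map_mul_self]
  ring

theorem γ_mul_map_X_mul_pred (n : ℕ) : γ n * L (X * P n * P (n - 1)) = γ n * h n := by
  cases n with
  | zero => simp [hP.γ_zero]
  | succ k => rw [Nat.add_sub_cancel, hP.map_X_mul_succ]

theorem map_quadratic_mul_self (c₁ c₀ : K) (n : ℕ) :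
    L ((X ^ 2 + C c₁ * X + C c₀) * (P n * P n)) =
      (γ (n + 1) + γ n + β n ^ 2 + c₁ * β n + c₀) * h n := by
  rw [L.map_quadratic_mul, hP.map_X_mul_X_mul, mul_right_comm, hP.map_X_mul_succ,
    hP.γ_mul_map_X_mul_pred, hP.map_X_mul_self, hP.map_mul_self, hP.h_succ]
  ring

theorem map_quadratic_mul_succ (c₁ c₀ : K) (n : ℕ) :
    L ((X ^ 2 + C c₁ * X + C c₀) * (P (n + 1) * P n)) =
      (β (n + 1) + β n + c₁) * h (n + 1) := by
  have hpred : γ n * L (X * P (n + 1) * P (n - 1)) = 0 := by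
    cases n with
    | zero => simp [hP.γ_zero]
    | succ k => rw [hP.map_X_mul_mul_of_lt (by omega), mul_zero]
  rw [L.map_quadratic_mul, hP.map_X_mul_X_mul, hpred, hP.map_X_mul_self, hP.map_X_mul_succ,
    hP.map_mul_of_ne (by omega)]
  ring

theorem map_quadratic_mul_succ_succ (c₁ c₀ : K) (n : ℕ) :
    L ((X ^ 2 + C c₁ * X + C c₀) * (P (n + 2) * P n)) = h (n + 2) := by
  rw [L.map_quadratic_mul, hP.map_X_mul_X_mul, hP.map_X_mul_succ,
    hP.map_X_mul_mul_of_lt (m := n) (by omega), hP.map_X_mul_mul_of_lt (m := n - 1) (by omega),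
    hP.map_mul_of_ne (by omega)]
  ring

theorem map_quadratic_mul_comp_mul (c₁ c₀ r : K) (n : ℕ) :
    L ((X ^ 2 + C c₁ * X + C c₀) * ((P n).comp (X + C r) * P n)) =
      (γ (n + 1) + γ n + β n ^ 2 + c₁ * β n + c₀ + n * r * (β n + β (n - 1) + c₁)
        + n.choose 2 * r ^ 2 - r * ((P n).nextCoeff + n * β (n - 1))) * h n := by
  rcases n with _ | _ | k
  · rw [hP.apply_zero, one_comp, ← hP.apply_zero, hP.map_quadratic_mul_self, hP.nextCoeff_zero]
    simp
  · have hcomp : (P 1).comp (X + C r) = P 1 + C r * P 0 := by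
      rw [hP.apply_one, hP.apply_zero]
      simp only [sub_comp, X_comp, C_comp]
      ring
    rw [hcomp, show (X ^ 2 + C c₁ * X + C c₀) * ((P 1 + C r * P 0) * P 1) =
        (X ^ 2 + C c₁ * X + C c₀) * (P 1 * P 1) + C r * ((X ^ 2 + C c₁ * X + C c₀) * (P 1 * P 0))
        by ring, map_add, L.map_C_mul, hP.map_quadratic_mul_self, hP.map_quadratic_mul_succ,
      hP.nextCoeff_succ, hP.nextCoeff_zero]
    simp
    ring
  · set a : K := (k + 2 : ℕ) * r
    set c : K := (k + 2).choose 2 * r ^ 2 - r * ((P (k + 2)).nextCoeff + (k + 2 : ℕ) * β (k + 1))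
    set D := (P (k + 2)).comp (X + C r) - (P (k + 2) + C a * P (k + 1) + C c * P k)
    have hD : L ((X ^ 2 + C c₁ * X + C c₀) * D * P (k + 2)) = 0 :=
      hP.map_mul_eq_zero_of_degree_lt
        (degree_quadratic_mul_lt c₁ c₀ (hP.degree_comp_X_add_C_sub_lt k r))
    rw [show (P (k + 2)).comp (X + C r) = P (k + 2) + C a * P (k + 1) + C c * P k + D by ring,
      show (X ^ 2 + C c₁ * X + C c₀) * ((P (k + 2) + C a * P (k + 1) + C c * P k + D) * P (k + 2)) =
        (X ^ 2 + C c₁ * X + C c₀) * (P (k + 2) * P (k + 2))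
          + C a * ((X ^ 2 + C c₁ * X + C c₀) * (P (k + 1 + 1) * P (k + 1)))
          + C c * ((X ^ 2 + C c₁ * X + C c₀) * (P (k + 2) * P k))
          + (X ^ 2 + C c₁ * X + C c₀) * D * P (k + 2) by ring,
      map_add, map_add, map_add, L.map_C_mul, L.map_C_mul, hD, hP.map_quadratic_mul_self,
      hP.map_quadratic_mul_succ, hP.map_quadratic_mul_succ_succ]
    simp only [a, c, Nat.add_sub_cancel]
    ring

variable (hh : ∀ n, h n ≠ 0) {z σ₁ σ₀ ρ₁ ρ₀ : K}
  (hpearson : ∀ q, L ((X ^ 2 + C σ₁ * X + C σ₀) * q) =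
    z * L ((X ^ 2 + C ρ₁ * X + C ρ₀) * q.comp (X + C 1)))
include hh hpearson

theorem moment_identity_of_pearson (n : ℕ) :
    γ (n + 1) + γ n + β n ^ 2 + σ₁ * β n + σ₀ - n * (β n + β (n - 1) + σ₁)
        + n.choose 2 + ((P n).nextCoeff + n * β (n - 1)) =
      z * (γ (n + 1) + γ n + β n ^ 2 + ρ₁ * β n + ρ₀ + n * (β n + β (n - 1) + ρ₁)
        + n.choose 2 - ((P n).nextCoeff + n * β (n - 1))) := by
  have hshift : ((P n).comp (X + C (-1)) * P n).comp (X + C 1) = (P n).comp (X + C 1) * P n := by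
    rw [mul_comp, comp_assoc, mul_comm]
    simp only [add_comp, X_comp, C_comp, add_assoc, ← C_add, add_neg_cancel, C_0, add_zero,
      comp_X]
  have hn := hpearson ((P n).comp (X + C (-1)) * P n)
  rw [hshift, hP.map_quadratic_mul_comp_mul, hP.map_quadratic_mul_comp_mul] at hn
  exact mul_right_cancel₀ (hh n) (by linear_combination hn)

theorem laguerre_freud_of_pearson (n : ℕ) :
    (1 - z) * ((γ (n + 2) + γ (n + 1)) - (γ (n + 1) + γ n)) =
      z * (β (n + 1) + β n + n + ρ₁) * ((β (n + 1) + (n + 1)) - (β n + n))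
        - (β (n + 1) + β n - (n + 1) + σ₁ + 1) * ((β (n + 1) - (n + 1)) - (β n - n)) := by
  have hsucc := hP.moment_identity_of_pearson hh hpearson (n + 1)
  have hchoose : ((n + 1).choose 2 : K) = n.choose 2 + n := by
    rw [Nat.choose_succ_succ, Nat.choose_one_right, Nat.cast_add, add_comm]
  rw [hP.nextCoeff_succ, hchoose, Nat.add_sub_cancel] at hsucc
  push_cast at hsucc
  linear_combination hsucc - hP.moment_identity_of_pearson hh hpearson n

end IsMonicOrthogonalSeq

end OrthogonalPolynomials

theorem summable_eval_mul_of_tendsto_ratio {w : ℕ → ℝ} (hw : ∀ x, 0 < w x) {z : ℝ} (hz : z < 1)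
    (hratio : Tendsto (fun x => w (x + 1) / w x) atTop (𝓝 z)) (p : ℝ[X]) :
    Summable fun x : ℕ => p.eval (x : ℝ) * w x := by
  have hmonomial (i : ℕ) : Summable fun x : ℕ => (x : ℝ) ^ i * w x := by
    refine summable_of_ratio_test_tendsto_lt_one hz ?_ ?_
    · filter_upwards [eventually_ne_atTop 0] with x hx
      exact mul_ne_zero (pow_ne_zero _ (Nat.cast_ne_zero.mpr hx)) (hw x).ne'
    · have hpow : Tendsto (fun x : ℕ => (((x : ℝ) + 1) / x) ^ i) atTop (𝓝 1) := by
        simpa [add_comm] using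
          (tendsto_add_mul_div_add_mul_atTop_nhds (1 : ℝ) 0 1 one_ne_zero).pow i
      refine (one_mul z ▸ hpow.mul hratio).congr' ?_
      filter_upwards [eventually_ne_atTop 0] with x hx
      have hx' : (x : ℝ) ≠ 0 := Nat.cast_ne_zero.mpr hx
      rw [norm_mul, norm_mul, Real.norm_of_nonneg (hw x).le, Real.norm_of_nonneg (hw (x + 1)).le,
        norm_pow, norm_pow, Real.norm_natCast, Real.norm_natCast, div_pow, Nat.cast_succ]
      field_simp
  simp_rw [eval_eq_sum_range, Finset.sum_mul]
  exact summable_sum fun i _ => by simpa [mul_assoc] using (hmonomial i).mul_left (p.coeff i)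

noncomputable def seriesFunctional (w : ℕ → ℝ)
    (hw : ∀ p : ℝ[X], Summable fun x : ℕ => p.eval (x : ℝ) * w x) : ℝ[X] →ₗ[ℝ] ℝ where
  toFun p := ∑' x : ℕ, p.eval (x : ℝ) * w x
  map_add' p q := by
    simp only [eval_add, add_mul]
    exact (hw p).tsum_add (hw q)
  map_smul' c p := by
    simp only [eval_smul, smul_eq_mul, mul_assoc, RingHom.id_apply]
    exact tsum_mul_left

theorem seriesFunctional_pearson {w : ℕ → ℝ}
    (hw : ∀ p : ℝ[X], Summable fun x : ℕ => p.eval (x : ℝ) * w x) {σ ρ : ℝ[X]} {z : ℝ}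
    (hσ : σ.eval 0 = 0)
    (hweight : ∀ x : ℕ, σ.eval ((x : ℝ) + 1) * w (x + 1) = z * (ρ.eval (x : ℝ) * w x))
    (q : ℝ[X]) :
    seriesFunctional w hw (σ * q) = z * seriesFunctional w hw (ρ * q.comp (X + C 1)) := by
  change ∑' x : ℕ, _ = z * ∑' x : ℕ, _
  rw [(hw _).tsum_eq_zero_add, ← tsum_mul_left]
  simp only [eval_mul, Nat.cast_zero, hσ, zero_mul, zero_add, eval_comp, eval_add, eval_X, eval_C,
    Nat.cast_succ]
  congr 1
  ext x
  linear_combination q.eval ((x : ℝ) + 1) * hweight x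

noncomputable def hahnWeight (a₁ a₂ b z : ℝ) (x : ℕ) : ℝ :=
  (ascPochhammer ℝ x).eval a₁ * (ascPochhammer ℝ x).eval a₂ * z ^ x /
    ((ascPochhammer ℝ x).eval (b + 1) * x.factorial)

section HahnWeight

variable {a₁ a₂ b z : ℝ}

theorem hahnWeight_pos (ha₁ : 0 < a₁) (ha₂ : 0 < a₂) (hb : -1 < b) (hz : 0 < z) (x : ℕ) :
    0 < hahnWeight a₁ a₂ b z x := by
  have := ascPochhammer_pos x a₁ ha₁
  have := ascPochhammer_pos x a₂ ha₂
  have := ascPochhammer_pos x (b + 1) (by linarith)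
  unfold hahnWeight
  positivity

theorem hahnWeight_succ (hb : -1 < b) (x : ℕ) :
    hahnWeight a₁ a₂ b z (x + 1) * ((x + 1) * (x + 1 + b)) =
      z * ((x + a₁) * (x + a₂) * hahnWeight a₁ a₂ b z x) := by
  have := ascPochhammer_pos x (b + 1) (by linarith)
  have : (0 : ℝ) < b + 1 + x := by linarith [(Nat.cast_nonneg x : (0 : ℝ) ≤ x)]
  unfold hahnWeight
  rw [ascPochhammer_succ_eval, ascPochhammer_succ_eval, ascPochhammer_succ_eval,
    Nat.factorial_succ]
  push_cast
  field_simp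
  ring

theorem tendsto_hahnWeight_ratio (ha₁ : 0 < a₁) (ha₂ : 0 < a₂) (hb : -1 < b) (hz : 0 < z) :
    Tendsto (fun x => hahnWeight a₁ a₂ b z (x + 1) / hahnWeight a₁ a₂ b z x) atTop (𝓝 z) := by
  have hlim := ((tendsto_add_mul_div_add_mul_atTop_nhds a₁ 1 1 one_ne_zero).mul
    (tendsto_add_mul_div_add_mul_atTop_nhds a₂ (b + 1) 1 one_ne_zero)).const_mul z
  simp only [div_one, mul_one, one_mul] at hlim
  refine hlim.congr fun x => ?_
  have : (0 : ℝ) < b + 1 + x := by linarith [(Nat.cast_nonneg x : (0 : ℝ) ≤ x)]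
  rw [eq_div_iff (hahnWeight_pos ha₁ ha₂ hb hz x).ne']
  field_simp
  linear_combination -hahnWeight_succ (a₁ := a₁) (a₂ := a₂) (z := z) hb x

theorem summable_eval_mul_hahnWeight (ha₁ : 0 < a₁) (ha₂ : 0 < a₂) (hb : -1 < b) (hz₀ : 0 < z)
    (hz₁ : z < 1) (p : ℝ[X]) : Summable fun x : ℕ => p.eval (x : ℝ) * hahnWeight a₁ a₂ b z x :=
  summable_eval_mul_of_tendsto_ratio (hahnWeight_pos ha₁ ha₂ hb hz₀) hz₁
    (tendsto_hahnWeight_ratio ha₁ ha₂ hb hz₀) p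

theorem seriesFunctional_hahnWeight_pearson (hb : -1 < b)
    (hs : ∀ p : ℝ[X], Summable fun x : ℕ => p.eval (x : ℝ) * hahnWeight a₁ a₂ b z x)
    (q : ℝ[X]) :
    seriesFunctional _ hs ((X ^ 2 + C b * X + C 0) * q) =
      z * seriesFunctional _ hs ((X ^ 2 + C (a₁ + a₂) * X + C (a₁ * a₂)) * q.comp (X + C 1)) := by
  refine seriesFunctional_pearson hs (by simp) (fun x => ?_) q
  simp only [eval_add, eval_pow, eval_mul, eval_C, eval_X, C_0, add_zero]
  linear_combination hahnWeight_succ (a₁ := a₁) (a₂ := a₂) (z := z) hb x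

end HahnWeight

/-- first Laguerre–Freud equation for the generalized Hahn
polynomials of type I:
(1−z)∇ₙ(γ_{n+1}+γₙ) = z vₙ ∇ₙ(βₙ+n) − uₙ ∇ₙ(βₙ−n), n ≥ 1. -/
theorem generalized_hahn_laguerre_freud_one
    (a1 a2 b z : ℝ) (ha1 : 0 < a1) (ha2 : 0 < a2) (hb : -1 < b)
    (hz0 : 0 < z) (hz1 : z < 1)
    (w : ℕ → ℝ)
    (hw : ∀ x : ℕ, w x =
      (ascPochhammer ℝ x).eval a1 * (ascPochhammer ℝ x).eval a2 * z ^ x /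
        ((ascPochhammer ℝ x).eval (b + 1) * x.factorial))
    (P : ℕ → Polynomial ℝ) (h : ℕ → ℝ)
    (hmonic : ∀ n, (P n).Monic) (hdeg : ∀ n, (P n).natDegree = n)
    (hh : ∀ n, h n ≠ 0)
    (horth : ∀ n m : ℕ,
      (∑' x : ℕ, (P n * P m).eval (x : ℝ) * w x) = if n = m then h n else 0)
    (β γ : ℕ → ℝ) (hγ0 : γ 0 = 0)
    (hrec : ∀ n : ℕ, X * P n = P (n + 1) + C (β n) * P n + C (γ n) * P (n - 1))
    (u v : ℕ → ℝ)
    (hu : ∀ n : ℕ, 1 ≤ n → u n = β n + β (n - 1) - (n : ℝ) + b + 1)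
    (hv : ∀ n : ℕ, 1 ≤ n → v n = β n + β (n - 1) + (n : ℝ) - 1 + a1 + a2) :
    ∀ n : ℕ, 1 ≤ n →
      (1 - z) * ((γ (n + 1) + γ n) - (γ n + γ (n - 1))) =
        z * v n * ((β n + (n : ℝ)) - (β (n - 1) + ((n : ℝ) - 1)))
          - u n * ((β n - (n : ℝ)) - (β (n - 1) - ((n : ℝ) - 1))) := by
  intro n hn
  obtain ⟨m, rfl⟩ := Nat.exists_eq_add_of_le' hn
  obtain rfl : w = hahnWeight a1 a2 b z := funext hw
  have hs := summable_eval_mul_hahnWeight ha1 ha2 hb hz0 hz1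
  have hP : IsMonicOrthogonalSeq (seriesFunctional _ hs) P h β γ :=
    ⟨hmonic, hdeg, horth, hrec, hγ0⟩
  have hLF := hP.laguerre_freud_of_pearson hh (seriesFunctional_hahnWeight_pearson hb hs) m
  rw [hu _ hn, hv _ hn, Nat.add_sub_cancel]
  push_cast
  linear_combination hLF
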